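/- Let q ≥ 1 and let 0 → F^0 ⊗ O(−d) → F^1 ⊗ O(−d+1) → ⋯ → F^d ⊗ O → 0 be a complex of sheaves on P^{q-1}, where F^0, …, F^d are finite-dimensional complex vector spaces, which is exact at every position except possibly at position j (0 ≤ j ≤ d), and which is not the zero complex. If q > d then the complex is not exact at position j, i.e., its homology sheaf at position j is nonzero. -/

import Mathlib

/-!
Suppose the complex were exact everywhere and let `n` be the top degree with `Kⁿ ≠ 0`,
`X = O(-d+n)`. For `i < n` the twist `-d+i` lies strictly between `-d+n-q` and `-d+n`, so every
`Ext^k(X, Kⁱ)` vanishes. Exactness gives short exact sequences `0 → Zⁱ → Kⁱ → Zⁱ⁺¹ → 0` with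
`Z⁰ = 0`, and the long exact `Ext(X, -)` sequences propagate the vanishing to all `Ext^k(X, Zⁱ)`,
`i ≤ n`. But `Zⁿ = Kⁿ` contains `X` as a summand, while `Hom(X, X) ≠ 0`.
-/

open CategoryTheory CategoryTheory.Limits CategoryTheory.Abelian
attribute [local instance] CategoryTheory.Abelian.hasFiniteBiproducts

universe w v u

section

variable {C : Type u} [Category.{v} C] [Abelian C]

lemma isZero_biproduct_of_isEmpty {J : Type} [Fintype J] [IsEmpty J] (f : J → C) :
    IsZero (⨁ f) := by
  rw [IsZero.iff_id_eq_zero, ← biproduct.total]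
  simp

namespace HomologicalComplex

variable {ι : Type*} {c : ComplexShape ι} (K : HomologicalComplex C c)

lemma iCycles_comp_toCycles (i j : ι) : K.iCycles i ≫ K.toCycles i j = 0 := by
  simp [← cancel_mono (K.iCycles j)]

lemma shortExact_cycles_of_exactAt {i j : ι} (hij : c.Rel i j) (hj : K.ExactAt j) :
    (ShortComplex.mk _ _ (K.iCycles_comp_toCycles i j)).ShortExact := by
  have hexact : (ShortComplex.mk _ _ (K.iCycles_comp_toCycles i j)).Exact :=
    ShortComplex.exact_of_f_is_kernel _
      (isKernelOfComp (K.iCycles j) _ (K.cyclesIsKernel i j (c.next_eq' hij)) _ (K.toCycles_i i j))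
  have hepi : Epi (K.toCycles i j) :=
    Preadditive.epi_of_isZero_cokernel' _ (K.homologyIsCokernel i j (c.prev_eq' hij))
      hj.isZero_homology
  exact ShortComplex.ShortExact.mk' hexact inferInstance hepi

end HomologicalComplex

namespace CategoryTheory.Abelian.Ext

variable [HasExt.{w} C]

lemma subsingleton_of_isZero_right (X : C) {Y : C} (hY : IsZero Y) (n : ℕ) :
    Subsingleton (Ext.{w} X Y n) :=
  subsingleton_of_forall_eq 0 fun α => by
    rw [← Ext.comp_mk₀_id α, hY.eq_of_src (𝟙 Y) 0, Ext.mk₀_zero, Ext.comp_zero]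

lemma subsingleton_of_iso_right (X : C) {Y Y' : C} (e : Y ≅ Y') (n : ℕ)
    [h : Subsingleton (Ext.{w} X Y n)] : Subsingleton (Ext.{w} X Y' n) :=
  haveI : Subsingleton ((extFunctorObj X n).obj Y) := h
  ((extFunctorObj X n).mapIso e).symm.addCommGroupIsoToAddEquiv.injective.subsingleton

lemma subsingleton_biproduct_iff (X : C) {J : Type} [Fintype J] (f : J → C) (n : ℕ) :
    Subsingleton (Ext.{w} X (⨁ f) n) ↔ ∀ j, Subsingleton (Ext.{w} X (f j) n) := by
  rw [(Ext.addEquivBiproduct X (biproduct.isBilimit f) n).toEquiv.subsingleton_congr]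
  exact ⟨fun _ j => (Function.surjective_eval (β := fun j => Ext.{w} X (f j) n) j).subsingleton,
    fun _ => inferInstance⟩

lemma subsingleton_X₃_of_shortExact (X : C) {S : ShortComplex C} (hS : S.ShortExact) (k : ℕ)
    [Subsingleton (Ext.{w} X S.X₂ k)] [Subsingleton (Ext.{w} X S.X₁ (k + 1))] :
    Subsingleton (Ext.{w} X S.X₃ k) :=
  subsingleton_of_forall_eq 0 fun γ => by
    obtain ⟨β, rfl⟩ :=
      Ext.covariant_sequence_exact₃ X hS γ rfl (Subsingleton.elim _ _)
    rw [Subsingleton.elim β 0, Ext.zero_comp]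

end CategoryTheory.Abelian.Ext

namespace CochainComplex

variable [HasExt.{w} C]

lemma subsingleton_ext_cycles (K : CochainComplex C ℕ) (X : C) (n : ℕ)
    (hK : ∀ i ≤ n, K.ExactAt i) (hX : ∀ i < n, ∀ k, Subsingleton (Ext.{w} X (K.X i) k)) (k : ℕ) :
    Subsingleton (Ext.{w} X (K.cycles n) k) := by
  induction n generalizing k with
  | zero =>
    exact Ext.subsingleton_of_isZero_right X
      ((hK 0 le_rfl).isZero_homology.of_iso K.isoHomologyπ₀) k
  | succ n ih =>
    have := hX n n.lt_succ_self k
    have := ih (fun i hi => hK i (hi.trans n.le_succ)) (fun i hi => hX i (hi.trans n.lt_succ_self))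
      (k + 1)
    exact Ext.subsingleton_X₃_of_shortExact X
      (K.shortExact_cycles_of_exactAt (i := n) rfl (hK (n + 1) le_rfl)) k

end CochainComplex

lemma subsingleton_ext_twist [HasExt.{w} C] (q : ℕ) (O : ℤ → C)
    (hO : ∀ (x y : ℤ) (i : ℕ),
      Nontrivial (Ext.{w} (O x) (O y) i) ↔ (i = 0 ∧ x ≤ y) ∨ (i = q - 1 ∧ y + (q : ℤ) ≤ x))
    {x y : ℤ} (hyx : y < x) (hxy : x < y + q) (k : ℕ) :
    Subsingleton (Ext.{w} (O x) (O y) k) := by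
  rw [← not_nontrivial_iff_subsingleton, hO]
  omega

end

theorem stmt17_general {C : Type u} [Category.{v} C] [Abelian C] [HasExt.{w} C]
    (q d j : ℕ) (hqd : d < q)
    (O : ℤ → C)
    (hO : ∀ (x y : ℤ) (i : ℕ),
      Nontrivial (Ext (O x) (O y) i) ↔ (i = 0 ∧ x ≤ y) ∨ (i = q - 1 ∧ y + (q : ℤ) ≤ x))
    (m : ℕ → ℕ)
    (K : CochainComplex C ℕ)
    (hK : ∀ i, i ≤ d → K.X i = ⨁ (fun _ : Fin (m i) => O (-(d : ℤ) + (i : ℤ))))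
    (hK0 : ∀ i, d < i → IsZero (K.X i))
    (hnz : ¬ ∀ i, IsZero (K.X i))
    (hex : ∀ i, i ≠ j → K.ExactAt i) :
    ¬ K.ExactAt j := by
  intro hj
  have hexact (i : ℕ) : K.ExactAt i := by
    rcases eq_or_ne i j with rfl | h
    exacts [hj, hex i h]
  set S := {i | ¬ IsZero (K.X i)}
  have hSd : ∀ i ∈ S, i ≤ d := fun i hi => not_lt.mp fun h => hi (hK0 i h)
  set n := sSup S
  have hn : n ∈ S := Nat.sSup_mem (not_forall.mp hnz) ⟨d, hSd⟩
  have hnd : n ≤ d := hSd n hn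
  have hcycles := K.subsingleton_ext_cycles (O (-d + n)) n (fun i _ => hexact i)
    (fun i hi k => by
      rw [hK i (hi.le.trans hnd), Ext.subsingleton_biproduct_iff]
      exact fun _ => subsingleton_ext_twist q O hO (by omega) (by omega) k) 0
  have htop : IsZero (K.X (n + 1)) :=
    not_not.mp fun h => (le_csSup ⟨d, hSd⟩ h).not_gt n.lt_succ_self
  have htopExt := Ext.subsingleton_of_iso_right (O (-d + n))
    (K.iCyclesIso n (n + 1) (by simp) (htop.eq_of_tgt _ _)) 0
  rw [hK n hnd, Ext.subsingleton_biproduct_iff] at htopExt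
  have hm : Nonempty (Fin (m n)) := by
    by_contra h
    rw [not_nonempty_iff] at h
    exact hn (hK n hnd ▸ isZero_biproduct_of_isEmpty _)
  exact not_nontrivial_iff_subsingleton.mpr (htopExt (Classical.choice hm))
    ((hO _ _ 0).mpr (Or.inl ⟨rfl, le_rfl⟩))

theorem stmt17 {C : Type u} [Category.{v} C] [Abelian C] [HasExt.{w} C]
    (q d j : ℕ) (hq : 1 ≤ q) (hj : j ≤ d) (hqd : d < q)
    (O : ℤ → C)
    (hO : ∀ (x y : ℤ) (i : ℕ),
      Nontrivial (Ext (O x) (O y) i) ↔ (i = 0 ∧ x ≤ y) ∨ (i = q - 1 ∧ y + (q : ℤ) ≤ x))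
    (m : ℕ → ℕ)
    (K : CochainComplex C ℕ)
    (hK : ∀ i, i ≤ d → K.X i = ⨁ (fun _ : Fin (m i) => O (-(d : ℤ) + (i : ℤ))))
    (hK0 : ∀ i, d < i → IsZero (K.X i))
    (hnz : ¬ ∀ i, IsZero (K.X i))
    (hex : ∀ i, i ≠ j → K.ExactAt i) :
    ¬ K.ExactAt j :=
  stmt17_general q d j hqd O hO m K hK hK0 hnz hex
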